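/- Let P = (p(x,y))_{x,y∈X} be an irreducible stochastic matrix on a countable set X which is reversible with respect to a function v : X → (0,∞), i.e. v(x)p(x,y) = v(y)p(y,x) for all x,y. Let d be the graph distance associated with the adjacency relation x ~ y ⇔ p(x,y) > 0 (symmetric by reversibility), and let B_n(x) = {y ∈ X : d(x,y) ≤ n}. Then for every x ∈ X and every n ≥ 0, p^{(2n)}(x,x) ≥ v(x) / ∑_{y ∈ B_n(x)} v(y) (where the right-hand side is interpreted as 0 if the sum diverges). -/

import Mathlib

/-!
Reversibility gives `v y * p⁽ⁿ⁾(y, x) = v x * p⁽ⁿ⁾(x, y)`, so with `m y := p⁽ⁿ⁾(y, x)` the weight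
`v y * m y` vanishes outside the ball `Bₙ(x)`, and `∑ v y * m y = v x` and `∑ v y * m y ^ 2 = v x * p⁽²ⁿ⁾(x, x)`.
Cauchy–Schwarz on `Bₙ(x)` with weights `v` then gives `v x ^ 2 ≤ v(Bₙ(x)) * v x * p⁽²ⁿ⁾(x, x)`.
-/

open Filter MeasureTheory ProbabilityTheory
open scoped ENNReal NNReal

/-- `n`-step weights (matrix powers) of a weight kernel `μ` on a countable set. -/
noncomputable def matPow {X : Type*} [DecidableEq X] (μ : X → X → ℝ≥0∞) :
    ℕ → X → X → ℝ≥0∞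
  | 0, x, y => if x = y then 1 else 0
  | n + 1, x, y => ∑' z, matPow μ n x z * μ z y

/-- `(X, μ)` has bounded row sums. -/
def bddRows {X : Type*} (μ : X → X → ℝ≥0∞) : Prop :=
  ∃ K : ℝ≥0∞, K ≠ ⊤ ∧ ∀ x, ∑' y, μ x y ≤ K

/-- `(X, μ)` is connected. -/
def connectedW {X : Type*} [DecidableEq X] (μ : X → X → ℝ≥0∞) : Prop :=
  ∀ x y, ∃ n, 0 < n ∧ 0 < matPow μ n x y

/-- `limsup_n (μ^{(n)}(x,y))^{1/n}`, the reciprocal of the convergence parameter. -/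
noncomputable def lsRoot {X : Type*} [DecidableEq X] (μ : X → X → ℝ≥0∞) (x y : X) : ℝ≥0∞ :=
  Filter.limsup (fun n : ℕ => matPow μ n x y ^ (n : ℝ)⁻¹) Filter.atTop

/-- The convergence parameter `R = 1 / limsup_n (μ^{(n)}(x,y))^{1/n}`. -/
noncomputable def convR {X : Type*} [DecidableEq X] (μ : X → X → ℝ≥0∞) (x y : X) : ℝ≥0∞ :=
  (lsRoot μ x y)⁻¹

open Classical in
/-- Restriction of a weight kernel to a subset (extended by `0`). -/
noncomputable def restrictW {X : Type*} (μ : X → X → ℝ≥0∞) (A : Set X) : X → X → ℝ≥0∞ :=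
  fun x y => if x ∈ A ∧ y ∈ A then μ x y else 0

section matPow

variable {X : Type*} [DecidableEq X] (μ : X → X → ℝ≥0∞)

theorem matPow_add (m n : ℕ) (x y : X) :
    matPow μ (m + n) x y = ∑' z, matPow μ m x z * matPow μ n z y := by
  induction n generalizing y with
  | zero => simp [matPow]
  | succ n ih =>
    simp_rw [← add_assoc, matPow, ih, ← ENNReal.tsum_mul_right, ← ENNReal.tsum_mul_left, mul_assoc]
    exact ENNReal.tsum_comm

theorem matPow_one (x y : X) : matPow μ 1 x y = μ x y := by
  simp [matPow]

theorem matPow_succ_left (n : ℕ) (x y : X) :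
    matPow μ (n + 1) x y = ∑' z, μ x z * matPow μ n z y := by
  simp_rw [add_comm n, matPow_add, matPow_one]

theorem tsum_matPow_eq_one (hμ : ∀ x, ∑' y, μ x y = 1) (n : ℕ) (x : X) :
    ∑' y, matPow μ n x y = 1 := by
  induction n with
  | zero => simp [matPow]
  | succ n ih =>
    simp_rw [matPow]
    rw [ENNReal.tsum_comm]
    simp_rw [ENNReal.tsum_mul_left, hμ, mul_one, ih]

theorem matPow_reversible {v : X → ℝ≥0∞} (hrev : ∀ x y, v x * μ x y = v y * μ y x)
    (n : ℕ) (x y : X) : v x * matPow μ n x y = v y * matPow μ n y x := by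
  induction n generalizing x y with
  | zero => by_cases h : x = y <;> simp [matPow, h, eq_comm]
  | succ n ih =>
    calc v x * matPow μ (n + 1) x y = ∑' z, v x * matPow μ n x z * μ z y := by
          rw [matPow, ← ENNReal.tsum_mul_left]; simp_rw [mul_assoc]
      _ = ∑' z, v y * (μ y z * matPow μ n z x) := by
          refine tsum_congr fun z => ?_
          rw [ih, mul_right_comm, hrev]; ring
      _ = v y * matPow μ (n + 1) y x := by rw [matPow_succ_left, ENNReal.tsum_mul_left]

end matPow

theorem ENNReal.tsum_mul_le_weight_mul_Lp {ι : Type*} {p : ℝ} (hp : 1 ≤ p) (w f : ι → ℝ≥0∞) :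
    ∑' i, w i * f i ≤ (∑' i, w i) ^ (1 - p⁻¹) * (∑' i, w i * f i ^ p) ^ p⁻¹ := by
  rw [ENNReal.tsum_eq_iSup_sum]
  refine iSup_le fun s => (ENNReal.inner_le_weight_mul_Lp_of_nonneg s hp w f).trans ?_
  gcongr
  · exact sub_nonneg.2 (inv_le_one_of_one_le₀ hp)
  · exact ENNReal.sum_le_tsum s
  · exact ENNReal.sum_le_tsum s

theorem ENNReal.tsum_mul_sq_le {ι : Type*} (w f : ι → ℝ≥0∞) :
    (∑' i, w i * f i) ^ 2 ≤ (∑' i, w i) * ∑' i, w i * f i ^ 2 := by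
  have h := ENNReal.tsum_mul_le_weight_mul_Lp one_le_two w f
  rw [show (1 : ℝ) - 2⁻¹ = 2⁻¹ by norm_num] at h
  simp_rw [ENNReal.rpow_two] at h
  calc (∑' i, w i * f i) ^ 2
      ≤ ((∑' i, w i) ^ (2⁻¹ : ℝ) * (∑' i, w i * f i ^ 2) ^ (2⁻¹ : ℝ)) ^ (2 : ℝ) := by
        rw [ENNReal.rpow_two]; gcongr
    _ = (∑' i, w i) * ∑' i, w i * f i ^ 2 := by
        rw [ENNReal.mul_rpow_of_nonneg _ _ zero_le_two, ENNReal.rpow_inv_rpow two_ne_zero,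
          ENNReal.rpow_inv_rpow two_ne_zero]

section Reversible

variable {X : Type*} [DecidableEq X] {μ : X → X → ℝ≥0∞} {v : X → ℝ≥0∞}

theorem tsum_mul_matPow_eq (hμ : ∀ x, ∑' y, μ x y = 1) (hrev : ∀ x y, v x * μ x y = v y * μ y x)
    (n : ℕ) (x : X) : ∑' y, v y * matPow μ n y x = v x := by
  simp_rw [← matPow_reversible μ hrev, ENNReal.tsum_mul_left, tsum_matPow_eq_one μ hμ, mul_one]

theorem tsum_mul_matPow_sq_eq (hrev : ∀ x y, v x * μ x y = v y * μ y x) (n : ℕ) (x : X) :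
    ∑' y, v y * matPow μ n y x ^ 2 = v x * matPow μ (2 * n) x x := by
  simp_rw [sq, ← mul_assoc, ← matPow_reversible μ hrev, mul_assoc, ENNReal.tsum_mul_left, two_mul,
    matPow_add]

theorem support_mul_matPow_subset (hrev : ∀ x y, v x * μ x y = v y * μ y x) (n : ℕ) (x : X) :
    (Function.support fun y => v y * matPow μ n y x) ⊆ {y | 0 < matPow μ n x y} :=
  fun y hy => pos_of_ne_zero (right_ne_zero_of_mul ((matPow_reversible μ hrev n x y).trans_ne hy))

end Reversible

theorem reversible_return_probability_lower_bound_general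
    {X : Type*} [DecidableEq X]
    (p : X → X → ℝ≥0∞)
    (hstoch : ∀ x, ∑' y, p x y = 1)
    (v : X → ℝ≥0∞) (hv0 : ∀ x, 0 < v x) (hvtop : ∀ x, v x ≠ ⊤)
    (hrev : ∀ x y, v x * p x y = v y * p y x) :
    ∀ (x : X) (n : ℕ),
      v x / (∑' y : {y : X // ∃ k ≤ n, 0 < matPow p k x y}, v y.1) ≤
        matPow p (2 * n) x x := by
  intro x n
  have hB : (Function.support fun y => v y * matPow p n y x) ⊆
      {y | ∃ k ≤ n, 0 < matPow p k x y} :=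
    (support_mul_matPow_subset hrev n x).trans fun y hy => ⟨n, le_rfl, hy⟩
  have hB_sq : (Function.support fun y => v y * matPow p n y x ^ 2) ⊆
      {y | ∃ k ≤ n, 0 < matPow p k x y} :=
    fun y hy => hB (by simp_all [Function.mem_support])
  have h₁ : ∑' y : {y : X // ∃ k ≤ n, 0 < matPow p k x y}, v y * matPow p n y x = v x :=
    (tsum_subtype_eq_of_support_subset hB).trans (tsum_mul_matPow_eq hstoch hrev n x)
  have h₂ : ∑' y : {y : X // ∃ k ≤ n, 0 < matPow p k x y}, v y * matPow p n y x ^ 2 =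
      v x * matPow p (2 * n) x x :=
    (tsum_subtype_eq_of_support_subset hB_sq).trans (tsum_mul_matPow_sq_eq hrev n x)
  have hcs := ENNReal.tsum_mul_sq_le (fun y : {y : X // ∃ k ≤ n, 0 < matPow p k x y} => v y)
    (fun y => matPow p n y x)
  rw [h₁, h₂, sq, mul_left_comm] at hcs
  exact ENNReal.div_le_of_le_mul' ((ENNReal.mul_le_mul_iff_right (hv0 x).ne' (hvtop x)).mp hcs)

/-- Lemma 6.2 of [CGZ]: for an irreducible stochastic kernel `p` reversible
with respect to `v`, the return probabilities satisfy
`p^{(2n)}(x,x) ≥ v(x) / v(B_n(x))`, where `B_n(x)` is the ball of radius `n` in the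
graph distance (a vertex `y` is at distance `≤ n` from `x` iff some `p^{(k)}(x,y) > 0`
with `k ≤ n`), the right-hand side being `0` when the sum diverges. -/
theorem reversible_return_probability_lower_bound
    {X : Type*} [Countable X] [DecidableEq X]
    (p : X → X → ℝ≥0∞)
    (hstoch : ∀ x, ∑' y, p x y = 1)
    (hirr : connectedW p)
    (v : X → ℝ≥0∞) (hv0 : ∀ x, 0 < v x) (hvtop : ∀ x, v x ≠ ⊤)
    (hrev : ∀ x y, v x * p x y = v y * p y x) :
    ∀ (x : X) (n : ℕ),
      v x / (∑' y : {y : X // ∃ k ≤ n, 0 < matPow p k x y}, v y.1) ≤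
        matPow p (2 * n) x x :=
  reversible_return_probability_lower_bound_general p hstoch v hv0 hvtop hrev
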